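/- There exists an unsatisfiable pure 3CNF formula φ (namely (x∨y)∧(y∨z)∧(v∨x)∧(¬x∨¬z)∧(¬v∨¬y)∧(¬x∨¬y) with n=4 variables and m=6 clauses) and a 12-state DFA over {a,b} that is consistent with the sample sets P = {ε, b, a^12, a^11 b} ∪ {a^i b b b : 1≤i≤6} ∪ {a^i b b : 1≤i≤3} ∪ {a^i b b a : 4≤i≤6} and N = {a^j : 1≤j≤11} ∪ {a^i b, a^i b a : 1≤i≤6} ∪ {a^i b b : 4≤i≤6} (accepting everything in P and rejecting everything in N). -/

import Mathlib

/-!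
The formula is unsatisfiable: `x ∨ y` and `¬x ∨ ¬y` make exactly one of `x, y` true; if it is `x`,
then `¬x ∨ ¬z` and `¬x ∨ ¬y` falsify `y ∨ z`, and if it is `y`, then `¬v ∨ ¬y` falsifies `v ∨ x`.

The automaton reads `a` as a step around a 12-cycle, so after `aⁱ` it sits in state `i mod 12`
and accepts exactly the powers `a¹²ᵏ` among the words over `a`. Every other sample is `aⁱ w` with
`w` starting with `b`; from the states `0` and `11` the letter `b` leads to `0`, and otherwise the
`b`-transitions (Figure 2 of the paper) only have to separate the states `1, 2, 3` from `4, 5, 6`: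
they send the first block to `7` and the second to `8`; from `7` both `b` and `bb` return to
`0`, from `8` both `bb` and `ba` do, but `b` does not.
-/

open Fin.NatCast

theorem DFA.evalFrom_replicate {α σ : Type*} (M : DFA α σ) (s : σ) (a : α) (n : ℕ) :
    M.evalFrom s (List.replicate n a) = (M.step · a)^[n] s := by
  induction n with
  | zero => rfl
  | succ n ih =>
    rw [List.replicate_succ', M.evalFrom_append_singleton, ih, Function.iterate_succ_apply']

theorem Fin.forall_natCast_of_forall {n : ℕ} [NeZero n] {p : Fin n → Prop} {lo hi : ℕ}
    (hn : hi < n) (h : ∀ s : Fin n, lo ≤ s.val → s.val ≤ hi → p s)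
    (i : ℕ) (hlo : lo ≤ i) (hhi : i ≤ hi) : p i := by
  have hval : (i : Fin n).val = i := Fin.val_cast_of_lt (by omega)
  exact h i (by rwa [hval]) (by rwa [hval])

def twelveStateDFA : DFA Bool (Fin 12) where
  step
    | s, false => s + 1
    | 1, true | 2, true | 3, true => 7
    | 4, true | 5, true | 6, true => 8
    | 8, true => 11
    | _, true => 0
  start := 0
  accept := {0}

namespace twelveStateDFA

theorem evalFrom_replicate_false (s : Fin 12) (n : ℕ) :
    twelveStateDFA.evalFrom s (List.replicate n false) = s + n := by
  rw [DFA.evalFrom_replicate]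
  induction n with
  | zero => simp
  | succ n ih =>
    rw [Function.iterate_succ_apply', ih, Nat.cast_succ, ← add_assoc]
    rfl

theorem replicate_false_append_mem_accepts_iff (n : ℕ) (w : List Bool) :
    List.replicate n false ++ w ∈ twelveStateDFA.accepts ↔ twelveStateDFA.evalFrom n w = 0 := by
  change twelveStateDFA.evalFrom 0 _ ∈ ({0} : Set (Fin 12)) ↔ _
  rw [DFA.evalFrom_of_append, evalFrom_replicate_false, zero_add, Set.mem_singleton_iff]

theorem replicate_false_mem_accepts_iff (n : ℕ) :
    List.replicate n false ∈ twelveStateDFA.accepts ↔ 12 ∣ n := by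
  simpa [DFA.evalFrom_nil, Fin.natCast_eq_zero] using replicate_false_append_mem_accepts_iff n []

theorem replicate_false_append_mem_accepts {lo hi : ℕ} {w : List Bool} (hn : hi < 12)
    (h : ∀ s : Fin 12, lo ≤ s.val → s.val ≤ hi → twelveStateDFA.evalFrom s w = 0)
    (i : ℕ) (hlo : lo ≤ i) (hhi : i ≤ hi) :
    List.replicate i false ++ w ∈ twelveStateDFA.accepts :=
  (replicate_false_append_mem_accepts_iff i w).2 (Fin.forall_natCast_of_forall hn h i hlo hhi)

theorem replicate_false_append_notMem_accepts {lo hi : ℕ} {w : List Bool} (hn : hi < 12)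
    (h : ∀ s : Fin 12, lo ≤ s.val → s.val ≤ hi → twelveStateDFA.evalFrom s w ≠ 0)
    (i : ℕ) (hlo : lo ≤ i) (hhi : i ≤ hi) :
    List.replicate i false ++ w ∉ twelveStateDFA.accepts :=
  (replicate_false_append_mem_accepts_iff i w).not.2 (Fin.forall_natCast_of_forall hn h i hlo hhi)

end twelveStateDFA

open twelveStateDFA in
/-- Letter `a` is `false`, letter `b` is `true`. The pure CNF formula
`(x∨y)∧(y∨z)∧(v∨x)∧(¬x∨¬z)∧(¬v∨¬y)∧(¬x∨¬y)` is unsatisfiable, yet there is a 12-state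
DFA over `{a,b}` consistent with the sample sets `P` and `N` of the
Fernau–Heggernes–Villanger construction applied to it. -/
theorem unsat_formula_with_consistent_twelve_state_dfa :
    (¬ ∃ v x y z : Bool,
      ((x || y) && (y || z) && (v || x) && (!x || !z) && (!v || !y) && (!x || !y)) = true) ∧
    (∃ (σ : Type) (_ : Fintype σ) (A : DFA Bool σ),
      Fintype.card σ = 12 ∧
      [] ∈ A.accepts ∧
      [true] ∈ A.accepts ∧
      List.replicate 12 false ∈ A.accepts ∧
      (List.replicate 11 false ++ [true]) ∈ A.accepts ∧
      (∀ i, 1 ≤ i → i ≤ 6 →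
        List.replicate i false ++ [true, true, true] ∈ A.accepts) ∧
      (∀ i, 1 ≤ i → i ≤ 3 →
        List.replicate i false ++ [true, true] ∈ A.accepts) ∧
      (∀ i, 4 ≤ i → i ≤ 6 →
        List.replicate i false ++ [true, true, false] ∈ A.accepts) ∧
      (∀ j, 1 ≤ j → j ≤ 11 → List.replicate j false ∉ A.accepts) ∧
      (∀ i, 1 ≤ i → i ≤ 6 →
        List.replicate i false ++ [true] ∉ A.accepts ∧
        List.replicate i false ++ [true, false] ∉ A.accepts) ∧
      (∀ i, 4 ≤ i → i ≤ 6 →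
        List.replicate i false ++ [true, true] ∉ A.accepts)) := by
  refine ⟨by decide, Fin 12, inferInstance, twelveStateDFA, rfl,
    (replicate_false_mem_accepts_iff 0).2 (dvd_zero 12),
    (replicate_false_append_mem_accepts_iff 0 [true]).2 rfl,
    (replicate_false_mem_accepts_iff 12).2 dvd_rfl,
    (replicate_false_append_mem_accepts_iff 11 [true]).2 rfl,
    replicate_false_append_mem_accepts (by norm_num) (by decide),
    replicate_false_append_mem_accepts (by norm_num) (by decide),
    replicate_false_append_mem_accepts (by norm_num) (by decide),
    fun j hj₁ hj₂ => (replicate_false_mem_accepts_iff j).not.2 (by omega),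
    fun i hi₁ hi₂ =>
      ⟨replicate_false_append_notMem_accepts (by norm_num) (by decide) i hi₁ hi₂,
        replicate_false_append_notMem_accepts (by norm_num) (by decide) i hi₁ hi₂⟩,
    replicate_false_append_notMem_accepts (by norm_num) (by decide)⟩
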